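/- Let g^(0) be a unit vector in C^N, f : [N] -> R, Delta_f = -nabla_f^2, X_f = diag(f), W_f the f-smoothing operator, and g^(t) = exp(-i t Delta_f) g^(0). Then d/dt <X_f g^(t), g^(t)> = 2 Re(<i nabla_f g^(t), W_f g^(t)>). -/

import Mathlib

open Complex Matrix BigOperators
noncomputable section

/-- Standard Hermitian inner product on `ℂ^N`. -/
def ip {N : ℕ} (f g : Fin N → ℂ) : ℂ := ∑ v, f v * (starRingEnd ℂ) (g v)

/-- The (complexified) `f`-partial derivative matrix. -/
def nablaF {N : ℕ} (A : Matrix (Fin N) (Fin N) ℝ) (f : Fin N → ℝ) :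
    Matrix (Fin N) (Fin N) ℂ :=
  Matrix.of fun n m => (A n m : ℂ) * ((f n : ℂ) - (f m : ℂ))

/-- The location observable `X_f = diag f` on `ℂ^N`. -/
def Xf {N : ℕ} (f : Fin N → ℝ) : Matrix (Fin N) (Fin N) ℂ :=
  Matrix.diagonal fun v => (f v : ℂ)

/-- The `f`-smoothing operator `(W_f g)(v) = ∑_w A_{v,w} (f w - f v)² g(w)`. -/
def Wf {N : ℕ} (A : Matrix (Fin N) (Fin N) ℝ) (f : Fin N → ℝ) :
    Matrix (Fin N) (Fin N) ℂ :=
  Matrix.of fun v w => (A v w : ℂ) * ((f w : ℂ) - (f v : ℂ)) ^ 2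

lemma ip_mulVec_left {N : ℕ} (M : Matrix (Fin N) (Fin N) ℂ) (x y : Fin N → ℂ) :
    ip (M.mulVec x) y = ip x ((Mᴴ).mulVec y) := by
  simp only [ip, Matrix.mulVec, dotProduct, Matrix.conjTranspose_apply, map_sum,
    Finset.sum_mul, Finset.mul_sum]
  rw [Finset.sum_comm]
  refine Finset.sum_congr rfl fun v _ => Finset.sum_congr rfl fun w _ => ?_
  simp only [Complex.star_def, _root_.map_mul, Complex.conj_conj]
  ring

lemma star_ip {N : ℕ} (x y : Fin N → ℂ) :
    (starRingEnd ℂ) (ip x y) = ip y x := by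
  simp only [ip, map_sum]
  refine Finset.sum_congr rfl fun v _ => ?_
  rw [_root_.map_mul, Complex.conj_conj]
  ring

lemma ip_sub_left {N : ℕ} (x y z : Fin N → ℂ) :
    ip (x - y) z = ip x z - ip y z := by
  simp [ip, sub_mul, Finset.sum_sub_distrib]

lemma ip_add_left {N : ℕ} (x y z : Fin N → ℂ) :
    ip (x + y) z = ip x z + ip y z := by
  simp [ip, add_mul, Finset.sum_add_distrib]

lemma ip_neg_right {N : ℕ} (x y : Fin N → ℂ) :
    ip x (-y) = -ip x y := by
  simp [ip]

lemma ip_smul_left {N : ℕ} (c : ℂ) (x y : Fin N → ℂ) :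
    ip (c • x) y = c * ip x y := by
  simp only [ip, Pi.smul_apply, smul_eq_mul, Finset.mul_sum]
  exact Finset.sum_congr rfl fun v _ => by ring

lemma nablaF_conjTranspose {N : ℕ} (A : Matrix (Fin N) (Fin N) ℝ) (hA : A.IsSymm)
    (f : Fin N → ℝ) : (nablaF A f)ᴴ = -(nablaF A f) := by
  ext n m
  simp only [Matrix.conjTranspose_apply, nablaF, Matrix.of_apply, Matrix.neg_apply,
    Complex.star_def, _root_.map_mul, map_sub, Complex.conj_ofReal]
  rw [show (A m n : ℂ) = (A n m : ℂ) by exact_mod_cast congrArg Complex.ofReal (hA.apply n m)]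
  ring

lemma Wf_conjTranspose {N : ℕ} (A : Matrix (Fin N) (Fin N) ℝ) (hA : A.IsSymm)
    (f : Fin N → ℝ) : (Wf A f)ᴴ = Wf A f := by
  ext n m
  simp only [Matrix.conjTranspose_apply, Wf, Matrix.of_apply, Complex.star_def, _root_.map_mul,
    map_sub, map_pow, Complex.conj_ofReal]
  rw [show (A m n : ℂ) = (A n m : ℂ) by exact_mod_cast congrArg Complex.ofReal (hA.apply n m)]
  ring

lemma Xf_conjTranspose {N : ℕ} (f : Fin N → ℝ) : (Xf f)ᴴ = Xf f := by
  ext n m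
  rcases eq_or_ne n m with h | h
  · subst h
    simp [Xf, Matrix.conjTranspose_apply, Matrix.diagonal_apply_eq, Complex.star_def,
      Complex.conj_ofReal]
  · simp [Xf, Matrix.conjTranspose_apply, Matrix.diagonal_apply_ne, h, h.symm]

lemma commutator_identity {N : ℕ} (A : Matrix (Fin N) (Fin N) ℝ) (f : Fin N → ℝ) :
    Xf f * (nablaF A f * nablaF A f) - (nablaF A f * nablaF A f) * Xf f =
      nablaF A f * Wf A f + Wf A f * nablaF A f := by
  ext n m
  rw [Matrix.sub_apply, Matrix.add_apply, Xf, Matrix.diagonal_mul, Matrix.mul_diagonal]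
  simp only [Matrix.mul_apply, nablaF, Wf, Matrix.of_apply]
  rw [Finset.mul_sum, Finset.sum_mul, ← Finset.sum_sub_distrib, ← Finset.sum_add_distrib]
  refine Finset.sum_congr rfl fun k _ => ?_
  ring

lemma key_identity {N : ℕ} (A : Matrix (Fin N) (Fin N) ℝ) (hA : A.IsSymm) (f : Fin N → ℝ)
    (u : Fin N → ℂ) :
    (∑ v, ((f v : ℂ) * (Complex.I * ((nablaF A f * nablaF A f).mulVec u) v) * star (u v)
        + (f v : ℂ) * u v * star (Complex.I * ((nablaF A f * nablaF A f).mulVec u) v))) =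
      (((2 * (ip ((Complex.I • nablaF A f).mulVec u) ((Wf A f).mulVec u)).re : ℝ) : ℂ)) := by
  set G := nablaF A f with hGdef
  set W := Wf A f with hWdef
  set q : Fin N → ℂ := (G * G).mulVec u with hq
  set z : ℂ := Complex.I * ip ((Xf f).mulVec q) u with hz
  set T : ℂ := ip ((Complex.I • G).mulVec u) (W.mulVec u) with hT
  have h1 : (∑ v, (f v : ℂ) * (Complex.I * q v) * star (u v)) = z := by
    rw [hz, ip, Finset.mul_sum]
    refine Finset.sum_congr rfl fun v _ => ?_
    rw [Xf, Matrix.mulVec_diagonal]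
    simp only [starRingEnd_apply]
    ring
  have h2 : (∑ v, (f v : ℂ) * u v * star (Complex.I * q v)) = (starRingEnd ℂ) z := by
    rw [← h1, map_sum]
    refine Finset.sum_congr rfl fun v _ => ?_
    simp only [Complex.star_def, _root_.map_mul, Complex.conj_conj, Complex.conj_ofReal]
    ring
  have hGt := nablaF_conjTranspose A hA f
  have hGG : (G * G)ᴴ = G * G := by
    rw [Matrix.conjTranspose_mul, hGt]
    simp
    rfl
  have hz_conj : (starRingEnd ℂ) z = -Complex.I * ip ((Xf f).mulVec u) q := by
    rw [hz, _root_.map_mul, star_ip, Complex.conj_I]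
    rw [ip_mulVec_left (Xf f) u q, Xf_conjTranspose]
  have e1 : ip ((Xf f).mulVec q) u = ip ((Xf f * (G * G)).mulVec u) u := by
    rw [hq, Matrix.mulVec_mulVec]
  have e2 : ip ((Xf f).mulVec u) q = ip ((G * G * Xf f).mulVec u) u := by
    have h3 : ip ((G * G).mulVec ((Xf f).mulVec u)) u =
        ip ((Xf f).mulVec u) ((G * G).mulVec u) := by
      rw [ip_mulVec_left, hGG]
    rw [hq, ← h3, Matrix.mulVec_mulVec]
  have hstep : z + (starRingEnd ℂ) z =
      Complex.I * ip ((Xf f * (G * G) - (G * G) * Xf f).mulVec u) u := by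
    rw [hz_conj, hz, e1, e2, Matrix.sub_mulVec, ip_sub_left]
    ring
  have hB : Complex.I * ip ((W * G).mulVec u) u = T := by
    rw [← Matrix.mulVec_mulVec, ip_mulVec_left, hWdef, Wf_conjTranspose A hA f, hT,
      Matrix.smul_mulVec, ip_smul_left, ← hWdef]
  have hAt : Complex.I * ip ((G * W).mulVec u) u = (starRingEnd ℂ) T := by
    rw [← Matrix.mulVec_mulVec, ip_mulVec_left, hGt, Matrix.neg_mulVec, ip_neg_right, hT,
      Matrix.smul_mulVec, ip_smul_left, _root_.map_mul, Complex.conj_I, star_ip]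
    ring
  have main : z + (starRingEnd ℂ) z = T + (starRingEnd ℂ) T := by
    rw [hstep, commutator_identity A f, ← hGdef, ← hWdef, Matrix.add_mulVec, ip_add_left,
      mul_add, hB, hAt]
    exact add_comm _ _
  calc (∑ v, ((f v : ℂ) * (Complex.I * q v) * star (u v)
          + (f v : ℂ) * u v * star (Complex.I * q v)))
      = (∑ v, (f v : ℂ) * (Complex.I * q v) * star (u v))
        + (∑ v, (f v : ℂ) * u v * star (Complex.I * q v)) := Finset.sum_add_distrib
    _ = z + (starRingEnd ℂ) z := by rw [h1, h2]
    _ = T + (starRingEnd ℂ) T := main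
    _ = (((2 * T.re : ℝ) : ℂ)) := Complex.add_conj T

/-- Expected feature location derivative under Schrödinger dynamics:
`d/dt ⟨X_f g^(t), g^(t)⟩ = 2 Re ⟨i ∇_f g^(t), W_f g^(t)⟩`. -/
theorem deriv_expected_location (N : ℕ) (A : Matrix (Fin N) (Fin N) ℝ)
    (hA : A.IsSymm) (f : Fin N → ℝ) (g0 : Fin N → ℂ) (hg0 : ip g0 g0 = 1)
    (t : ℝ) :
    HasDerivAt
      (fun s : ℝ =>
        ip ((Xf f).mulVec
            ((NormedSpace.exp ((-(Complex.I * (s : ℂ))) •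
              (-(nablaF A f * nablaF A f)))).mulVec g0))
          ((NormedSpace.exp ((-(Complex.I * (s : ℂ))) •
              (-(nablaF A f * nablaF A f)))).mulVec g0))
      (((2 * (ip ((Complex.I • nablaF A f).mulVec
            ((NormedSpace.exp ((-(Complex.I * (t : ℂ))) •
              (-(nablaF A f * nablaF A f)))).mulVec g0))
          ((Wf A f).mulVec
            ((NormedSpace.exp ((-(Complex.I * (t : ℂ))) •
              (-(nablaF A f * nablaF A f)))).mulVec g0))).re : ℝ) : ℂ))
      t := by
  classical
  set G : Matrix (Fin N) (Fin N) ℂ := nablaF A f with hGdef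
  set M : Matrix (Fin N) (Fin N) ℂ := -(G * G) with hMdef
  set Et : Matrix (Fin N) (Fin N) ℂ := NormedSpace.exp ((-(Complex.I * (t : ℂ))) • M)
    with hEtdef
  set u : Fin N → ℂ := Et.mulVec g0 with hudef
  set du : Fin N → ℂ := ((-Complex.I) • (M * Et)).mulVec g0 with hdudef
  -- componentwise derivative of the evolved vector
  have hcomp : ∀ v : Fin N,
      HasDerivAt (fun s : ℝ =>
        (NormedSpace.exp ((-(Complex.I * (s : ℂ))) • M)).mulVec g0 v) (du v) t := by
    letI : SeminormedRing (Matrix (Fin N) (Fin N) ℂ) := Matrix.linftyOpSemiNormedRing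
    letI : NormedRing (Matrix (Fin N) (Fin N) ℂ) := Matrix.linftyOpNormedRing
    letI : NormedAlgebra ℂ (Matrix (Fin N) (Fin N) ℂ) := Matrix.linftyOpNormedAlgebra
    intro v
    have h1 : HasDerivAt (fun z : ℂ => NormedSpace.exp (z • M))
        (M * NormedSpace.exp ((-(Complex.I * (t : ℂ))) • M)) (-(Complex.I * (t : ℂ))) :=
      hasDerivAt_exp_smul_const' M _
    have h2 : HasDerivAt (fun s : ℝ => -(Complex.I * (s : ℂ))) (-Complex.I) t := by
      simpa using ((Complex.ofRealCLM.hasDerivAt (x := t)).const_mul Complex.I).fun_neg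
    have hexp : HasDerivAt (fun s : ℝ => NormedSpace.exp ((-(Complex.I * (s : ℂ))) • M))
        ((-Complex.I) • (M * Et)) t := by
      exact h1.scomp t h2
    let L : Matrix (Fin N) (Fin N) ℂ →ₗ[ℝ] ℂ :=
      { toFun := fun P => P.mulVec g0 v
        map_add' := by intro P Q; simp [Matrix.add_mulVec]
        map_smul' := by
          intro r P
          simp [Matrix.mulVec, dotProduct, Finset.smul_sum, smul_mul_assoc, mul_assoc] }
    have hL := (LinearMap.toContinuousLinearMap L).hasFDerivAt.comp_hasDerivAt t hexp
    exact hL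
  have hterm : ∀ v : Fin N,
      HasDerivAt (fun s : ℝ =>
          (f v : ℂ) * ((NormedSpace.exp ((-(Complex.I * (s : ℂ))) • M)).mulVec g0 v) *
            star ((NormedSpace.exp ((-(Complex.I * (s : ℂ))) • M)).mulVec g0 v))
        ((f v : ℂ) * du v * star (u v) + (f v : ℂ) * u v * star (du v)) t := by
    intro v
    exact ((hcomp v).const_mul ((f v : ℂ))).mul (hcomp v).star
  have hsum : HasDerivAt (fun s : ℝ => ∑ v,
      (f v : ℂ) * ((NormedSpace.exp ((-(Complex.I * (s : ℂ))) • M)).mulVec g0 v) *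
        star ((NormedSpace.exp ((-(Complex.I * (s : ℂ))) • M)).mulVec g0 v))
      (∑ v, ((f v : ℂ) * du v * star (u v) + (f v : ℂ) * u v * star (du v))) t :=
    HasDerivAt.fun_sum fun v _ => hterm v
  have hfun : (fun s : ℝ =>
      ip ((Xf f).mulVec ((NormedSpace.exp ((-(Complex.I * (s : ℂ))) • M)).mulVec g0))
        ((NormedSpace.exp ((-(Complex.I * (s : ℂ))) • M)).mulVec g0)) =
      fun s : ℝ => ∑ v,
        (f v : ℂ) * ((NormedSpace.exp ((-(Complex.I * (s : ℂ))) • M)).mulVec g0 v) *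
          star ((NormedSpace.exp ((-(Complex.I * (s : ℂ))) • M)).mulVec g0 v) := by
    funext s
    rw [ip]
    refine Finset.sum_congr rfl fun v _ => ?_
    rw [Xf, Matrix.mulVec_diagonal, starRingEnd_apply]
  have hdu : ∀ v, du v = Complex.I * ((G * G).mulVec u) v := by
    intro v
    rw [hdudef, Matrix.smul_mulVec, Matrix.mulVec_mulVec, hMdef, Matrix.neg_mul,
      Matrix.neg_mulVec, ← Matrix.mulVec_mulVec, ← hudef]
    simp
  have hD : (∑ v, ((f v : ℂ) * du v * star (u v) + (f v : ℂ) * u v * star (du v))) =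
      (((2 * (ip ((Complex.I • G).mulVec u) ((Wf A f).mulVec u)).re : ℝ) : ℂ)) := by
    rw [← key_identity A hA f u, ← hGdef]
    refine Finset.sum_congr rfl fun v _ => ?_
    rw [hdu v]
  rw [hfun]
  rw [hD] at hsum
  exact hsum
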